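/- arXiv:2510.25433 — 3 statements merged into one kernel-verified Lean document; each statement's English description precedes it below -/
import Mathlib

section
/- Let κ > 0 and y_0, a, b be real numbers with b > 0 and |a| < κ. Define x_c = κ·(1 - (a/κ)^2)^(3/2)/b and y_c = y_0 - a·(1 - (a/κ)^2)/b, and set r_c = sqrt((y_c - y_0)^2 + x_c^2). Then both stationarity conditions hold: a + κ·(y_c - y_0)/r_c = 0 and b - κ·x_c^2/r_c^3 = 0. -/
/-!
Put `u = 1 - (a/κ)²` and `R = κu/b`. Since `(a/κ)² + u = 1`, the vector `(-a/κ, √u)` is a unit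
vector and `(y_c - y_0, x_c) = R • (-a/κ, √u)`, so `r_c = R`. The first condition then reads
`a + κ(-a/κ) = 0`, and the second `b = κ x_c² / R³ = κu / R`, which is the definition of `R`.
-/

open Real

lemma one_sub_div_sq_pos {a κ : ℝ} (ha : |a| < κ) : 0 < 1 - (a / κ) ^ 2 := by
  have hκ : 0 < κ := (abs_nonneg a).trans_lt ha
  have : (a / κ) ^ 2 < 1 := by
    rwa [sq_lt_one_iff_abs_lt_one, abs_div, abs_of_pos hκ, div_lt_one hκ]
  linarith

lemma rpow_three_div_two_eq_mul_sqrt {u : ℝ} (hu : 0 ≤ u) : u ^ ((3 : ℝ) / 2) = u * √u := by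
  rw [sqrt_eq_rpow, ← rpow_one_add' hu (by norm_num)]
  norm_num

lemma sqrt_mul_sq_add_mul_sq {R s c : ℝ} (hR : 0 ≤ R) (h : s ^ 2 + c ^ 2 = 1) :
    √((R * s) ^ 2 + (R * c) ^ 2) = R := by
  rw [mul_pow, mul_pow, ← mul_add, h, mul_one, sqrt_sq hR]

theorem airy_caustic_converse_general
    (κ y_0 a b : ℝ)
    (hb : 0 < b) (ha : |a| < κ)
    (x_c y_c r_c : ℝ)
    (hx : x_c = κ * (1 - (a / κ)^2) ^ ((3 : ℝ) / 2) / b)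
    (hy : y_c = y_0 - a * (1 - (a / κ)^2) / b)
    (hr : r_c = Real.sqrt ((y_c - y_0)^2 + x_c^2)) :
    a + κ * (y_c - y_0) / r_c = 0 ∧ b - κ * x_c^2 / r_c^3 = 0 := by
  have hκ : 0 < κ := (abs_nonneg a).trans_lt ha
  set u := 1 - (a / κ) ^ 2
  have hu : 0 < u := one_sub_div_sq_pos ha
  have hy' : y_c - y_0 = κ * u / b * (-(a / κ)) := by
    rw [hy]; field_simp; ring
  have hx' : x_c = κ * u / b * √u := by
    rw [hx, rpow_three_div_two_eq_mul_sqrt hu.le]; ring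
  have hr' : r_c = κ * u / b := by
    rw [hr, hy', hx']
    exact sqrt_mul_sq_add_mul_sq (by positivity) (by rw [sq_sqrt hu.le]; ring)
  constructor
  · rw [hy', hr']; field_simp; ring
  · rw [hx', hr', mul_pow, sq_sqrt hu.le]; field_simp; ring

theorem airy_caustic_converse
    (κ y_0 a b : ℝ)
    (hκ : 0 < κ) (hb : 0 < b) (ha : |a| < κ)
    (x_c y_c r_c : ℝ)
    (hx : x_c = κ * (1 - (a / κ)^2) ^ ((3 : ℝ) / 2) / b)
    (hy : y_c = y_0 - a * (1 - (a / κ)^2) / b)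
    (hr : r_c = Real.sqrt ((y_c - y_0)^2 + x_c^2)) :
    a + κ * (y_c - y_0) / r_c = 0 ∧ b - κ * x_c^2 / r_c^3 = 0 :=
  airy_caustic_converse_general κ y_0 a b hb ha x_c y_c r_c hx hy hr
end

section
/- Let κ > 0, r ≠ 0, c ≠ 0, and θ, y_0 be real numbers. Define φ'(y_0) = κ·(-sin θ + (cos θ)^2·y_0/r - (2πc)^3·y_0^2/κ) and φ''(y_0) = κ·((cos θ)^2/r - 2·(2πc)^3·y_0/κ), and assume φ''(y_0) ≠ 0. Set x_c = κ/φ''(y_0) and y_c = y_0 - φ'(y_0)/φ''(y_0). Then y_c = x_c·sin θ - κ·x_c·(cos θ)^4/(32·π^3·c^3·r^2) - κ/(32·π^3·c^3·x_c) + κ·(cos θ)^2/(16·π^3·c^3·r). -/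
/-!
With `s = sin θ`, `q = cos² θ / r` and `a = (2πc)³` the phase derivatives are
`φ' = -κ s + κ q y₀ - a y₀²` and `φ'' = κ q - 2 a y₀`. On the caustic `φ'' = κ / x_c`, and since `φ''`
is affine in `y₀` this recovers the source coordinate `y₀ = κ (q - 1 / x_c) / (2a)`; substituting it
into `y_c = y₀ - x_c φ' / κ` gives the trajectory.
-/

open Real

theorem cubicPhase_caustic_eq {K : Type*} [Field K] [CharZero K] {κ s q a y x : K}
    (hκ : κ ≠ 0) (ha : a ≠ 0) (hx : x * (κ * q - 2 * a * y) = κ) :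
    y - (-(κ * s) + κ * q * y - a * y ^ 2) / (κ * q - 2 * a * y)
      = x * s - κ * q ^ 2 * x / (4 * a) - κ / (4 * a * x) + κ * q / (2 * a) := by
  have hx0 : x ≠ 0 := left_ne_zero_of_mul (hx ▸ hκ)
  have hφ'' : κ * q - 2 * a * y = κ / x := by rw [eq_div_iff hx0, mul_comm, hx]
  have hy : y = κ * (q - 1 / x) / (2 * a) := by
    field_simp
    linear_combination -hx
  rw [hφ'', hy]
  field_simp
  ring

theorem airy_paraxial_trajectory_general
    (κ r c θ y_0 : ℝ) (hr : r ≠ 0) (hc : c ≠ 0)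
    (dφ ddφ : ℝ)
    (hd : dφ = κ * (-Real.sin θ + (Real.cos θ)^2 * y_0 / r - (2 * π * c)^3 * y_0^2 / κ))
    (hdd : ddφ = κ * ((Real.cos θ)^2 / r - 2 * (2 * π * c)^3 * y_0 / κ))
    (hdd0 : ddφ ≠ 0)
    (x_c y_c : ℝ)
    (hx : x_c = κ / ddφ)
    (hy : y_c = y_0 - dφ / ddφ) :
    y_c = x_c * Real.sin θ - κ * x_c * (Real.cos θ)^4 / (32 * π^3 * c^3 * r^2)
      - κ / (32 * π^3 * c^3 * x_c) + κ * (Real.cos θ)^2 / (16 * π^3 * c^3 * r) := by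
  have hκ : κ ≠ 0 := by
    rintro rfl
    exact hdd0 (by simpa using hdd)
  have hdd' : ddφ = κ * (cos θ ^ 2 / r) - 2 * (2 * π * c) ^ 3 * y_0 := by
    rw [hdd]
    field_simp
  have hd' : dφ = -(κ * sin θ) + κ * (cos θ ^ 2 / r) * y_0 - (2 * π * c) ^ 3 * y_0 ^ 2 := by
    rw [hd]
    field_simp
  have hx' : x_c * ddφ = κ := hx ▸ div_mul_cancel₀ κ hdd0
  rw [hdd'] at hx'
  rw [hy, hd', hdd', cubicPhase_caustic_eq hκ (by positivity) hx']
  ring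

theorem airy_paraxial_trajectory
    (κ r c θ y_0 : ℝ) (hκ : 0 < κ) (hr : r ≠ 0) (hc : c ≠ 0)
    (dφ ddφ : ℝ)
    (hd : dφ = κ * (-Real.sin θ + (Real.cos θ)^2 * y_0 / r - (2 * π * c)^3 * y_0^2 / κ))
    (hdd : ddφ = κ * ((Real.cos θ)^2 / r - 2 * (2 * π * c)^3 * y_0 / κ))
    (hdd0 : ddφ ≠ 0)
    (x_c y_c : ℝ)
    (hx : x_c = κ / ddφ)
    (hy : y_c = y_0 - dφ / ddφ) :
    y_c = x_c * Real.sin θ - κ * x_c * (Real.cos θ)^4 / (32 * π^3 * c^3 * r^2)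
      - κ / (32 * π^3 * c^3 * x_c) + κ * (Real.cos θ)^2 / (16 * π^3 * c^3 * r) :=
  airy_paraxial_trajectory_general κ r c θ y_0 hr hc dφ ddφ hd hdd hdd0 x_c y_c hx hy
end

section
/- Let κ > 0, r > 0, c ≠ 0, L > 0, and θ be real numbers, and define f : ℝ → ℝ by f(x) = x·sin θ - κ·x·(cos θ)^4/(32·π^3·c^3·r^2) - κ/(32·π^3·c^3·x) + κ·(cos θ)^2/(16·π^3·c^3·r). For x_c ≠ 0: (i) if κ·(cos θ)^2 + 8·π^3·c^3·r·L ≠ 0, then f(x_c) - x_c·f'(x_c) = -L/2 if and only if x_c = κ·r/(κ·(cos θ)^2 + 8·π^3·c^3·r·L); (ii) if κ·(cos θ)^2 - 8·π^3·c^3·r·L ≠ 0, then f(x_c) - x_c·f'(x_c) = L/2 if and only if x_c = κ·r/(κ·(cos θ)^2 - 8·π^3·c^3·r·L). -/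
/-!
The trajectory has the form `x ↦ m x - k / x + d`. Its linear part drops out of the tangent
intercept `f x - x f' x = d - 2k / x`, so the intercept condition is linear in `1 / x` and
each aperture edge gives exactly one solution.
-/

open Real

theorem sub_mul_deriv_eq_of_eq_linear_sub_div {g : ℝ → ℝ} {m k d x : ℝ}
    (hg : g = fun t => m * t - k / t + d) (hx : x ≠ 0) :
    g x - x * deriv g x = d - 2 * k / x := by
  have hderiv : HasDerivAt g (m - k * -(x ^ 2)⁻¹) x := by
    have hg' : g = fun t => m * t - k * t⁻¹ + d := by
      simp only [hg, div_eq_mul_inv]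
    rw [hg']
    exact (((hasDerivAt_id x).const_mul m).sub ((hasDerivAt_inv hx).const_mul k)).add_const d
      |>.congr_deriv (by simp)
  rw [hderiv.deriv, hg]
  field_simp
  ring

theorem div_sub_div_eq_iff_eq_div {A κ s r x y D : ℝ} (hs : s ≠ 0) (hr : r ≠ 0) (hx : x ≠ 0)
    (hD : D = A - s * r * y) (hD₀ : D ≠ 0) :
    A / (s * r) - κ / (s * x) = y ↔ x = κ * r / D := by
  rw [eq_div_iff hD₀, div_sub_div _ _ (mul_ne_zero hs hr) (mul_ne_zero hs hx),
    div_eq_iff (mul_ne_zero (mul_ne_zero hs hr) (mul_ne_zero hs hx)), hD]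
  constructor
  · intro h
    exact mul_left_cancel₀ hs (by linear_combination h)
  · intro h
    linear_combination s * h

theorem airy_max_distance_solutions_general
    (κ r c L θ : ℝ) (hr : 0 < r) (hc : c ≠ 0)
    (f : ℝ → ℝ)
    (hf : f = fun x => x * Real.sin θ - κ * x * (Real.cos θ)^4 / (32 * π^3 * c^3 * r^2)
      - κ / (32 * π^3 * c^3 * x) + κ * (Real.cos θ)^2 / (16 * π^3 * c^3 * r)) :
    ∀ x_c : ℝ, x_c ≠ 0 →
      ((κ * (Real.cos θ)^2 + 8 * π^3 * c^3 * r * L ≠ 0 →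
        (f x_c - x_c * deriv f x_c = -L / 2 ↔
          x_c = κ * r / (κ * (Real.cos θ)^2 + 8 * π^3 * c^3 * r * L))) ∧
       (κ * (Real.cos θ)^2 - 8 * π^3 * c^3 * r * L ≠ 0 →
        (f x_c - x_c * deriv f x_c = L / 2 ↔
          x_c = κ * r / (κ * (Real.cos θ)^2 - 8 * π^3 * c^3 * r * L)))) := by
  intro x hx
  have hs : (16 * π ^ 3 * c ^ 3 : ℝ) ≠ 0 := by positivity
  have hform : f = fun t => (Real.sin θ - κ * Real.cos θ ^ 4 / (32 * π ^ 3 * c ^ 3 * r ^ 2)) * t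
      - κ / (32 * π ^ 3 * c ^ 3) / t + κ * Real.cos θ ^ 2 / (16 * π ^ 3 * c ^ 3 * r) := by
    rw [hf]; funext t; ring
  have hintercept : f x - x * deriv f x
      = κ * Real.cos θ ^ 2 / (16 * π ^ 3 * c ^ 3 * r) - κ / (16 * π ^ 3 * c ^ 3 * x) := by
    rw [sub_mul_deriv_eq_of_eq_linear_sub_div hform hx]
    field_simp
    ring
  rw [hintercept]
  exact ⟨div_sub_div_eq_iff_eq_div hs hr.ne' hx (by ring),
    div_sub_div_eq_iff_eq_div hs hr.ne' hx (by ring)⟩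

theorem airy_max_distance_solutions
    (κ r c L θ : ℝ) (hκ : 0 < κ) (hr : 0 < r) (hc : c ≠ 0) (hL : 0 < L)
    (f : ℝ → ℝ)
    (hf : f = fun x => x * Real.sin θ - κ * x * (Real.cos θ)^4 / (32 * π^3 * c^3 * r^2)
      - κ / (32 * π^3 * c^3 * x) + κ * (Real.cos θ)^2 / (16 * π^3 * c^3 * r)) :
    ∀ x_c : ℝ, x_c ≠ 0 →
      ((κ * (Real.cos θ)^2 + 8 * π^3 * c^3 * r * L ≠ 0 →
        (f x_c - x_c * deriv f x_c = -L / 2 ↔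
          x_c = κ * r / (κ * (Real.cos θ)^2 + 8 * π^3 * c^3 * r * L))) ∧
       (κ * (Real.cos θ)^2 - 8 * π^3 * c^3 * r * L ≠ 0 →
        (f x_c - x_c * deriv f x_c = L / 2 ↔
          x_c = κ * r / (κ * (Real.cos θ)^2 - 8 * π^3 * c^3 * r * L)))) :=
  airy_max_distance_solutions_general κ r c L θ hr hc f hf
end
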